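/- Fix a real parameter δ and set γ = −2 in the reduced three-wave-interaction model. Let H(x,y,z) = x² + y² + z and let J(x,y,z) be the skew-symmetric matrix with J₁₂ = −y + δ/2, J₁₃ = z, J₂₃ = 0. Then the Hamiltonian vector field X_H = J∇H = (−2y² + δy + z, 2xy − δx, −2xz) has divergence zero everywhere, and for every (x,y,z) ∈ ℝ³ the right-hand side of the reduced three-wave-interaction model with γ = −2, namely (−2y² − 2x + z + δy, 2xy − 2y − δx, −2xz − 2z), equals J∇H − 2·(x,y,z), i.e. the system is the conformal Hamiltonian vector field X_H^{−2} = X_H + aΓ with a = −2 and Γ the Euler vector field. -/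
import Mathlib


set_option linter.unusedVariables false

open Matrix

/-- Partial derivative with respect to the first variable. -/
noncomputable def pd1 (f : ℝ → ℝ → ℝ → ℝ) (x y z : ℝ) : ℝ := deriv (fun t => f t y z) x
/-- Partial derivative with respect to the second variable. -/
noncomputable def pd2 (f : ℝ → ℝ → ℝ → ℝ) (x y z : ℝ) : ℝ := deriv (fun t => f x t z) y
/-- Partial derivative with respect to the third variable. -/
noncomputable def pd3 (f : ℝ → ℝ → ℝ → ℝ) (x y z : ℝ) : ℝ := deriv (fun t => f x y t) z

/-- Hamiltonian of the reduced three-wave-interaction model. -/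
noncomputable def H (x y z : ℝ) : ℝ := x ^ 2 + y ^ 2 + z

/-- Gradient of `H`. -/
noncomputable def gradH (x y z : ℝ) : Fin 3 → ℝ := ![pd1 H x y z, pd2 H x y z, pd3 H x y z]

/-- Poisson matrix of the reduced three-wave-interaction model. -/
noncomputable def Jmat (δ : ℝ) (x y z : ℝ) : Matrix (Fin 3) (Fin 3) ℝ :=
  !![0, -y + δ / 2, z; y - δ / 2, 0, 0; -z, 0, 0]

/-- The Hamiltonian vector field `X_H = J∇H`. -/
noncomputable def XH (δ : ℝ) (x y z : ℝ) : Fin 3 → ℝ :=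
  (Jmat δ x y z).mulVec (gradH x y z)

lemma gradH_eq (x y z : ℝ) : gradH x y z = ![2*x, 2*y, 1] := by
  have h1 : pd1 H x y z = 2*x := by
    simp only [pd1, H]
    rw [show (fun t : ℝ => t ^ 2 + y ^ 2 + z) = (fun t : ℝ => t ^ 2 + (y ^ 2 + z)) by
      funext t; ring]
    simp [deriv_add_const, mul_comm]
  have h2 : pd2 H x y z = 2*y := by
    simp only [pd2, H]
    rw [show (fun t : ℝ => x ^ 2 + t ^ 2 + z) = (fun t : ℝ => t ^ 2 + (x ^ 2 + z)) by
      funext t; ring]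
    simp [deriv_add_const, mul_comm]
  have h3 : pd3 H x y z = 1 := by
    simp only [pd3, H]
    rw [show (fun t : ℝ => x ^ 2 + y ^ 2 + t) = (fun t : ℝ => t + (x ^ 2 + y ^ 2)) by
      funext t; ring]
    simp
  simp [gradH, h1, h2, h3]

lemma XH_eq (δ x y z : ℝ) : XH δ x y z =
    ![-2 * y ^ 2 + δ * y + z, 2 * x * y - δ * x, -2 * x * z] := by
  funext i
  fin_cases i <;>
    simp [XH, gradH_eq, Jmat, mulVec, dotProduct, Fin.sum_univ_three] <;> ring

/-- With `γ = −2`, the Hamiltonian vector field `X_H = J∇H = (−2y² + δy + z, 2xy − δx,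
−2xz)` is divergence-free, and the reduced three-wave-interaction model equals the
conformal Hamiltonian vector field `X_H^{−2} = X_H − 2Γ`, where `Γ` is the Euler
vector field. -/
theorem stmt_18 (δ : ℝ) :
    (∀ x y z : ℝ, XH δ x y z =
      ![-2 * y ^ 2 + δ * y + z, 2 * x * y - δ * x, -2 * x * z]) ∧
    (∀ x y z : ℝ,
      pd1 (fun x y z => XH δ x y z 0) x y z + pd2 (fun x y z => XH δ x y z 1) x y z
        + pd3 (fun x y z => XH δ x y z 2) x y z = 0) ∧
    (∀ x y z : ℝ,
      ![-2 * y ^ 2 - 2 * x + z + δ * y, 2 * x * y - 2 * y - δ * x, -2 * x * z - 2 * z]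
        = XH δ x y z + (-2 : ℝ) • ![x, y, z]) := by
  refine ⟨XH_eq δ, ?_, ?_⟩
  · intro x y z
    have h1 : pd1 (fun x y z => XH δ x y z 0) x y z = 0 := by
      simp only [pd1, XH_eq]
      simp
    have h2 : pd2 (fun x y z => XH δ x y z 1) x y z = 2*x := by
      simp only [pd2, XH_eq]
      rw [show (fun t : ℝ => ![-2 * t ^ 2 + δ * t + z, 2 * x * t - δ * x, -2 * x * z] 1)
          = (fun t : ℝ => 2 * x * t - δ * x) by funext t; simp]
      rw [deriv_sub_const]
      rw [deriv_const_mul_field]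
      simp
    have h3 : pd3 (fun x y z => XH δ x y z 2) x y z = -(2*x) := by
      simp only [pd3, XH_eq]
      rw [show (fun t : ℝ => ![-2 * y ^ 2 + δ * y + t, 2 * x * y - δ * x, -2 * x * t] 2)
          = (fun t : ℝ => -2 * x * t) by funext t; simp]
      rw [deriv_const_mul_field]
      simp

    rw [h1, h2, h3]; ring
  · intro x y z
    funext i
    fin_cases i <;> simp [XH_eq] <;> ring
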